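/- Synthesis identity in d dimensions. Fix k ∈ {1,…,min_i n_i − 1}. For every (j₁,…,j_d) with j_i ∈ {k+1,…,n_i} for all i, one has D^k φ̃^k_{j₁,…,j_d} = 1_{{j₁}} × ⋯ × 1_{{j_d}} (the tensor in ℝ^{(n₁−k)×⋯×(n_d−k)} equal to 1 at index (j₁,…,j_d) and 0 elsewhere), and D^k φ̃^k_{j₁,…,j_d} = 0 whenever j_i ≤ k for some i. Consequently, if f = ∑_{j₁=k+1}^{n₁}⋯∑_{j_d=k+1}^{n_d} β_{j₁,…,j_d} φ̃^k_{j₁,…,j_d} for coefficients β ∈ ℝ^{(n₁−k)×⋯×(n_d−k)}, then D^k f = β. -/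

import Mathlib

open Finset

noncomputable section

namespace VitaliTV

variable {ι : Type*} [Fintype ι] [DecidableEq ι]

abbrev Idx (nn : ι → ℕ) := ∀ i, Fin (nn i)
abbrev Tensor (nn : ι → ℕ) := EuclideanSpace ℝ (Idx nn)
abbrev DIdx (nn : ι → ℕ) (k : ℕ) := ∀ i, Fin (nn i - k)

/-- The total `k`-th order difference operator `D^k = ∏ i, D_i^k`, including the
normalization `∏ i, nn i ^ (k-1) = n^(k-1)`.  The output entry at `j : DIdx nn k`
corresponds to the 1-based multi-index `(j i + k + 1)_i ∈ ∏ i, {k+1, …, nn i}`. -/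
def Dop (nn : ι → ℕ) (k : ℕ) (f : Tensor nn) : DIdx nn k → ℝ :=
  fun j => (∏ i, (nn i : ℝ) ^ (k - 1)) *
    ∑ l : ι → Fin (k + 1),
      (∏ i, ((-1 : ℝ) ^ (l i : ℕ) * (Nat.choose k (l i) : ℝ))) *
      f (fun i => ⟨(j i : ℕ) + k - (l i : ℕ), by have := (j i).isLt; omega⟩)

def phiHigh (n : ℕ) : ℕ → ℕ → Fin n → ℝ
  | 0, _ => fun _ => 0
  | 1, j => fun j' => if j ≤ (j' : ℕ) + 1 then 1 else 0
  | (k + 2), j => fun j' => (1 / (n : ℝ)) * ∑ l ∈ Finset.Icc j n, phiHigh n (k + 1) l j'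

/-- The original one-dimensional dictionary (1-based indices). -/
def phi (n k j : ℕ) : EuclideanSpace ℝ (Fin n) :=
  if j ≤ k - 1 then WithLp.toLp 2 (phiHigh n j j) else WithLp.toLp 2 (phiHigh n k j)

/-- Antiprojection operator: `AW W v` is the orthogonal projection of `v` onto `Wᗮ`. -/
def AW {E : Type*} [NormedAddCommGroup E] [InnerProductSpace ℝ E] [FiniteDimensional ℝ E]
    (W : Submodule ℝ E) (v : E) : E :=
  (Wᗮ.orthogonalProjection v : E)

def Vspan (n m : ℕ) : Submodule ℝ (EuclideanSpace ℝ (Fin n)) :=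
  Submodule.span ℝ {v | ∃ l ∈ Finset.Icc 1 m, v = phi n l l}

/-- The partially orthonormalized one-dimensional dictionary `φ̃^k_j`. -/
def phiTil (n k j : ℕ) : EuclideanSpace ℝ (Fin n) :=
  if j ≤ k then
    (Real.sqrt n / ‖AW (Vspan n (j - 1)) (phi n j j)‖) • AW (Vspan n (j - 1)) (phi n j j)
  else AW (Vspan n k) (phi n k j)

/-- The `d`-dimensional partially orthonormalized dictionary tensor
`φ̃^k_{j₁,…,j_d} = φ̃^k_{j₁} × ⋯ × φ̃^k_{j_d}` (the `j i` are 1-based). -/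
def phiTilD (nn : ι → ℕ) (k : ℕ) (j : ι → ℕ) : Tensor nn :=
  WithLp.toLp 2 (fun x => ∏ i, phiTil (nn i) k (j i) (x i))

/-! The closed form `phiHigh n (m + 1) j₀ x = n⁻ᵐ · C(x + m + 1 - j₀, m)` (for `x + 1 ≥ j₀`,
and `0` below) shows that `phiHigh n (m + 1) j₀` is a polynomial of degree `m` wherever it is
not cut off. Hence the `k`-th backward difference kills it on every stencil avoiding the cut-off
when `m < k`, and for `m + 1 = k` the only surviving stencil is the one whose top point is the
first nonzero entry, where the difference equals `n^{1-k}`. In particular the one-dimensional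
difference annihilates `V_k`, so it commutes with the projections `A_{V_m}`, `m ≤ k`; thus it
maps `φ̃^k_j` to `n^{1-k} δ_j` for `j > k` and to `0` for `j ≤ k`. Finally `D^k` of a product
tensor is the product of the one-dimensional differences of its factors, and the last claim
follows by linearity. -/

theorem fwdDiff_iter_choose_eq_zero {r k : ℕ} (h : r < k) :
    (fwdDiff 1)^[k] (fun x ↦ x.choose r : ℕ → ℤ) = 0 := by
  obtain ⟨m, rfl⟩ := Nat.exists_eq_add_of_lt h
  have hr := fwdDiff_iter_choose 0 r
  rw [add_zero] at hr
  rw [show r + m + 1 = m + 1 + r by ring, Function.iterate_add, Function.iterate_succ,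
    Function.comp_apply, Function.comp_apply, hr]
  simp only [Nat.choose_zero_right, Nat.cast_one, fwdDiff_const]
  exact Function.iterate_fixed (fwdDiff_const 1 0) m

theorem alternating_sum_choose_mul_choose_sub_eq_zero {k r a : ℕ} (hr : r < k) (ha : k ≤ a) :
    ∑ l ∈ range (k + 1), (-1 : ℤ) ^ l * k.choose l * (a - l).choose r = 0 := by
  have h := congr_fun (fwdDiff_iter_choose_eq_zero hr) (a - k)
  rw [Pi.zero_apply, fwdDiff_iter_eq_sum_shift, ← sum_range_reflect] at h
  rw [← h]
  refine sum_congr rfl fun l hl => ?_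
  have hl : l ≤ k := Nat.lt_succ_iff.mp (mem_range.mp hl)
  rw [Nat.add_sub_cancel, Nat.sub_sub_self hl, Nat.choose_symm hl, smul_eq_mul, nsmul_one,
    Nat.cast_id, show a - k + (k - l) = a - l by omega]

theorem sum_Icc_choose_sub {m j x : ℕ} (h : j ≤ x + 1) :
    ∑ l ∈ Icc j (x + 1), (x + m + 1 - l).choose m = (x + m + 2 - j).choose (m + 1) := by
  have reflect : ∑ l ∈ Icc j (x + 1), (x + m + 1 - l).choose m
      = ∑ i ∈ Icc m (x + m + 1 - j), i.choose m := by
    refine sum_nbij' (fun l => x + m + 1 - l) (fun i => x + m + 1 - i) ?_ ?_ ?_ ?_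
      fun _ _ => rfl <;> intro a ha <;> simp only [mem_Icc] at * <;> omega
  rw [reflect, Nat.sum_Icc_choose, show x + m + 1 - j + 1 = x + m + 2 - j by omega]

theorem phiHigh_succ_apply (n m j : ℕ) (x : Fin n) :
    phiHigh n (m + 1) j x =
      ((n : ℝ) ^ m)⁻¹ * if j ≤ x + 1 then (((x : ℕ) + m + 1 - j).choose m : ℝ) else 0 := by
  induction m generalizing j with
  | zero => simp [phiHigh]
  | succ m ih =>
    have hx : (x : ℕ) + 1 ≤ n := x.isLt
    have truncate : ∑ l ∈ Icc j n, (if l ≤ x + 1 then (((x : ℕ) + m + 1 - l).choose m : ℝ) else 0)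
        = ∑ l ∈ Icc j (x + 1), (((x : ℕ) + m + 1 - l).choose m : ℝ) := by
      rw [← sum_filter]
      congr 1
      ext l
      simp only [mem_filter, mem_Icc]
      omega
    change (1 / (n : ℝ)) * ∑ l ∈ Icc j n, phiHigh n (m + 1) l x = _
    simp only [ih, ← mul_sum, truncate]
    by_cases h : j ≤ x + 1
    · rw [if_pos h, ← Nat.cast_sum, sum_Icc_choose_sub h, pow_succ,
        show (x : ℕ) + (m + 1) + 1 - j = x + m + 2 - j by omega]
      field_simp
    · rw [if_neg h, Icc_eq_empty (by omega)]
      simp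

theorem phiHigh_succ_apply_of_le {n m j : ℕ} {x : Fin n} (h : j ≤ x + m + 1) :
    phiHigh n (m + 1) j x = ((n : ℝ) ^ m)⁻¹ * (((x : ℕ) + m + 1 - j).choose m : ℝ) := by
  rw [phiHigh_succ_apply]
  split_ifs with hj
  · rfl
  · rw [Nat.choose_eq_zero_of_lt (by omega), Nat.cast_zero]

/-- The one-dimensional factor `n^{1-k} D_i^k` of `Dop`, at the 0-based output index `j`. -/
def backDiff (n k : ℕ) (j : Fin (n - k)) : EuclideanSpace ℝ (Fin n) →ₗ[ℝ] ℝ where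
  toFun v := ∑ l : Fin (k + 1), (-1 : ℝ) ^ (l : ℕ) * k.choose l *
    v ⟨j + k - l, by have := j.isLt; omega⟩
  map_add' v w := by simp only [PiLp.add_apply, mul_add, sum_add_distrib]
  map_smul' c v := by
    simp only [PiLp.smul_apply, smul_eq_mul, RingHom.id_apply, mul_sum]
    exact sum_congr rfl fun _ _ => by ring

section

variable {n k : ℕ} (j : Fin (n - k))

theorem backDiff_apply (v : EuclideanSpace ℝ (Fin n)) :
    backDiff n k j v = ∑ l : Fin (k + 1), (-1 : ℝ) ^ (l : ℕ) * k.choose l *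
      v ⟨j + k - l, by have := j.isLt; omega⟩ := rfl

theorem backDiff_phiHigh_eq_zero {m j₀ : ℕ} (hm : m < k) (hj₀ : j₀ ≤ j + m + 1) :
    backDiff n k j (WithLp.toLp 2 (phiHigh n (m + 1) j₀)) = 0 := by
  rw [backDiff_apply, Fin.sum_univ_eq_sum_range (fun l => (-1 : ℝ) ^ l * k.choose l *
    phiHigh n (m + 1) j₀ ⟨j + k - l, by have := j.isLt; omega⟩)]
  have alternating : ∑ l ∈ range (k + 1),
      (-1 : ℝ) ^ l * k.choose l * (j + k + m + 1 - j₀ - l).choose m = 0 := by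
    exact_mod_cast alternating_sum_choose_mul_choose_sub_eq_zero hm (by omega)
  calc _ = ((n : ℝ) ^ m)⁻¹ * ∑ l ∈ range (k + 1),
        (-1 : ℝ) ^ l * k.choose l * (j + k + m + 1 - j₀ - l).choose m := by
        rw [mul_sum]
        refine sum_congr rfl fun l hl => ?_
        have hl : l ≤ k := Nat.lt_succ_iff.mp (mem_range.mp hl)
        rw [phiHigh_succ_apply_of_le (by dsimp only; omega),
          show j + k - l + m + 1 - j₀ = j + k + m + 1 - j₀ - l by omega]
        ring
    _ = 0 := by rw [alternating, mul_zero]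

theorem backDiff_phiHigh_of_lt {m j₀ : ℕ} (j : Fin (n - (m + 1))) (h : j + m + 1 < j₀) :
    backDiff n (m + 1) j (WithLp.toLp 2 (phiHigh n (m + 1) j₀)) =
      ((n : ℝ) ^ m)⁻¹ * if j + (m + 1) + 1 = j₀ then 1 else 0 := by
  rw [backDiff_apply, sum_eq_single 0 ?_ (by simp)]
  · simp only [Fin.val_zero, pow_zero, Nat.choose_zero_right, Nat.cast_one, one_mul,
      Nat.sub_zero, phiHigh_succ_apply]
    by_cases hj₀ : j + (m + 1) + 1 = j₀
    · rw [if_pos (by omega), if_pos hj₀, show j + (m + 1) + m + 1 - j₀ = m by omega,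
        Nat.choose_self, Nat.cast_one]
    · rw [if_neg (by omega), if_neg hj₀]
  · intro l _ hl
    have hl : 1 ≤ (l : ℕ) := Nat.one_le_iff_ne_zero.mpr (Fin.val_ne_zero_iff.mpr hl)
    rw [WithLp.ofLp_toLp, phiHigh_succ_apply, if_neg (by dsimp only; omega), mul_zero, mul_zero]

theorem backDiff_phiHigh (hk : 1 ≤ k) (j₀ : ℕ) :
    backDiff n k j (WithLp.toLp 2 (phiHigh n k j₀)) =
      ((n : ℝ) ^ (k - 1))⁻¹ * if j + k + 1 = j₀ then 1 else 0 := by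
  obtain ⟨m, rfl⟩ := Nat.exists_eq_add_of_le' hk
  rw [Nat.add_sub_cancel]
  by_cases h : j₀ ≤ j + m + 1
  · rw [backDiff_phiHigh_eq_zero j (Nat.lt_succ_self m) h, if_neg (by omega), mul_zero]
  · exact backDiff_phiHigh_of_lt j (by omega)

theorem map_AW_of_le_ker {E F : Type*} [NormedAddCommGroup E] [InnerProductSpace ℝ E]
    [FiniteDimensional ℝ E] [AddCommGroup F] [Module ℝ F] {W : Submodule ℝ E}
    {f : E →ₗ[ℝ] F} (h : W ≤ LinearMap.ker f) (v : E) : f (AW W v) = f v := by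
  change f (Wᗮ.starProjection v) = f v
  rw [Submodule.starProjection_orthogonal_val, map_sub,
    LinearMap.mem_ker.mp (h (W.starProjection_apply_mem v)), sub_zero]

theorem phi_of_le {j : ℕ} (h : k ≤ j) : phi n k j = WithLp.toLp 2 (phiHigh n k j) := by
  unfold phi
  split_ifs with h'
  · rw [show j = k by omega]
  · rfl

theorem Vspan_le_ker_backDiff {m : ℕ} (hm : m ≤ k) :
    Vspan n m ≤ LinearMap.ker (backDiff n k j) := by
  rw [Vspan, Submodule.span_le]
  rintro _ ⟨l, hl, rfl⟩
  obtain ⟨hl₁, hl₂⟩ := mem_Icc.mp hl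
  obtain ⟨l, rfl⟩ := Nat.exists_eq_add_of_le' hl₁
  rw [SetLike.mem_coe, LinearMap.mem_ker, phi_of_le le_rfl]
  exact backDiff_phiHigh_eq_zero j (by omega) (by omega)

theorem backDiff_phiTil_of_lt (hk : 1 ≤ k) {j₀ : ℕ} (h : k < j₀) :
    backDiff n k j (phiTil n k j₀) = ((n : ℝ) ^ (k - 1))⁻¹ * if j + k + 1 = j₀ then 1 else 0 := by
  rw [phiTil, if_neg h.not_ge, map_AW_of_le_ker (Vspan_le_ker_backDiff j le_rfl), phi_of_le h.le,
    backDiff_phiHigh j hk]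

theorem backDiff_phiTil_of_le {j₀ : ℕ} (h₀ : 1 ≤ j₀) (h : j₀ ≤ k) :
    backDiff n k j (phiTil n k j₀) = 0 := by
  obtain ⟨m, rfl⟩ := Nat.exists_eq_add_of_le' h₀
  rw [phiTil, if_pos h, map_smul, map_AW_of_le_ker (Vspan_le_ker_backDiff j (by omega)),
    phi_of_le le_rfl, backDiff_phiHigh_eq_zero j (by omega) (by omega), smul_zero]

end

def Dopₗ (nn : ι → ℕ) (k : ℕ) : Tensor nn →ₗ[ℝ] DIdx nn k → ℝ where
  toFun := Dop nn k
  map_add' f g := by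
    funext j
    simp only [Dop, PiLp.add_apply, mul_add, sum_add_distrib, Pi.add_apply]
  map_smul' c f := by
    funext j
    simp only [Dop, PiLp.smul_apply, smul_eq_mul, mul_sum, Pi.smul_apply, RingHom.id_apply]
    exact sum_congr rfl fun _ _ => by ring

variable {nn : ι → ℕ} {k : ℕ}

theorem Dop_toLp_prod (g : ∀ i, EuclideanSpace ℝ (Fin (nn i))) (j : DIdx nn k) :
    Dop nn k (WithLp.toLp 2 fun x : Idx nn => ∏ i, g i (x i)) j =
      ∏ i, (nn i : ℝ) ^ (k - 1) * backDiff (nn i) k (j i) (g i) := by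
  simp only [Dop, prod_mul_distrib, backDiff_apply, prod_univ_sum, Fintype.piFinset_univ]

theorem Dop_phiTilD_of_lt (hk : 1 ≤ k) {j : ι → ℕ} (hj : ∀ i, k + 1 ≤ j i ∧ j i ≤ nn i) :
    Dop nn k (phiTilD nn k j) = fun j' => if ∀ i, (j' i : ℕ) + k + 1 = j i then 1 else 0 := by
  funext j'
  rw [phiTilD, Dop_toLp_prod, ← Fintype.prod_boole]
  refine prod_congr rfl fun i _ => ?_
  have hn : (nn i : ℝ) ≠ 0 := Nat.cast_ne_zero.mpr (by have := hj i; omega)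
  rw [backDiff_phiTil_of_lt _ hk (hj i).1, mul_inv_cancel_left₀ (pow_ne_zero _ hn)]

theorem Dop_phiTilD_eq_zero {j : ι → ℕ} (hj : ∀ i, 1 ≤ j i) (hlow : ∃ i, j i ≤ k) :
    Dop nn k (phiTilD nn k j) = 0 := by
  funext j'
  obtain ⟨i, hi⟩ := hlow
  rw [phiTilD, Dop_toLp_prod]
  exact prod_eq_zero (mem_univ i) (by rw [backDiff_phiTil_of_le _ (hj i) hi, mul_zero])

theorem synthesis_identity_general (nn : ι → ℕ) (k : ℕ)
    (hk : 1 ≤ k) :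
    (∀ j : ι → ℕ, (∀ i, k + 1 ≤ j i ∧ j i ≤ nn i) →
      Dop nn k (phiTilD nn k j)
        = fun j' : DIdx nn k => if ∀ i, (j' i : ℕ) + k + 1 = j i then 1 else 0) ∧
    (∀ j : ι → ℕ, (∀ i, 1 ≤ j i ∧ j i ≤ nn i) → (∃ i, j i ≤ k) →
      Dop nn k (phiTilD nn k j) = 0) ∧
    (∀ β : DIdx nn k → ℝ,
      Dop nn k (∑ j : DIdx nn k, β j • phiTilD nn k (fun i => (j i : ℕ) + k + 1)) = β) := by
  refine ⟨fun j hj => Dop_phiTilD_of_lt hk hj,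
    fun j hj hlow => Dop_phiTilD_eq_zero (fun i => (hj i).1) hlow, fun β => ?_⟩
  have dirac (j : DIdx nn k) :
      Dop nn k (phiTilD nn k fun i => j i + k + 1) = fun j' => if j = j' then 1 else 0 := by
    rw [Dop_phiTilD_of_lt hk fun i => ⟨by omega, by have := (j i).isLt; omega⟩]
    funext j'
    simp only [add_left_inj, ← Fin.ext_iff, ← funext_iff, eq_comm]
  conv_rhs => rw [pi_eq_sum_univ β]
  change Dopₗ nn k _ = _
  simp only [map_sum, map_smul]
  exact sum_congr rfl fun j _ => congrArg (β j • ·) (dirac j)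

/-- **Synthesis identity in `d` dimensions.**  Fix `k ∈ {1, …, min_i n_i − 1}`.  For every
1-based multi-index `(j₁,…,j_d)` with `j_i ∈ {k+1,…,n_i}` for all `i`, one has
`D^k φ̃^k_{j₁,…,j_d} = 1_{{(j₁,…,j_d)}}`; and `D^k φ̃^k_{j₁,…,j_d} = 0` whenever `j_i ≤ k`
for some `i`.  Consequently, if `f = ∑_{j} β_j φ̃^k_j` (the sum over
`j ∈ ∏ i, {k+1,…,n_i}`) for coefficients `β ∈ ℝ^{(n₁−k)×⋯×(n_d−k)}`, then `D^k f = β`. -/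
theorem synthesis_identity (nn : ι → ℕ) (k : ℕ)
    (hk : 1 ≤ k) (hk' : ∀ i, k ≤ nn i - 1) :
    (∀ j : ι → ℕ, (∀ i, k + 1 ≤ j i ∧ j i ≤ nn i) →
      Dop nn k (phiTilD nn k j)
        = fun j' : DIdx nn k => if ∀ i, (j' i : ℕ) + k + 1 = j i then 1 else 0) ∧
    (∀ j : ι → ℕ, (∀ i, 1 ≤ j i ∧ j i ≤ nn i) → (∃ i, j i ≤ k) →
      Dop nn k (phiTilD nn k j) = 0) ∧
    (∀ β : DIdx nn k → ℝ,
      Dop nn k (∑ j : DIdx nn k, β j • phiTilD nn k (fun i => (j i : ℕ) + k + 1)) = β) :=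
  synthesis_identity_general nn k hk

end VitaliTV
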